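/- Let ρ_x (x ∈ {0,1}²) be four qubit states and let {M_{0|y}, M_{1|y}} (y ∈ {0,1}) be two binary qubit POVMs whose observables M_y = M_{0|y} − M_{1|y} = c_{y0}𝟙 + c⃗_y·σ⃗ have Bloch vectors of common length η = |c⃗_0| = |c⃗_1|. Then the witness W_AB = (1/8)·Σ_{x,y} tr[ρ_x M_{x_y|y}] satisfies W_AB ≤ 1/2 + η/(2√2); equivalently, η ≥ √2(2·W_AB − 1). Moreover this bound is tight: for every η ∈ [0,1] there exist states and POVMs of sharpness η attaining W_AB = 1/2 + η/(2√2). -/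

import Mathlib

open Matrix ComplexOrder

noncomputable section

/-- The bit `x_y` of `x = (x₀, x₁)`. -/
def bit (x : Bool × Bool) (y : Bool) : Bool := if y then x.2 else x.1

/-- The Pauli matrices `(σx, σy, σz)`. -/
def pauli : Fin 3 → Matrix (Fin 2) (Fin 2) ℂ :=
  ![!![0, 1; 1, 0], !![0, -Complex.I; Complex.I, 0], !![1, 0; 0, -1]]

/-- The RAC witness `W_AB = (1/8) ∑_{x,y} tr[ρ_x M_{x_y|y}]` for states `ρ`
and POVMs `M`. -/
def WABm (ρ : Bool × Bool → Matrix (Fin 2) (Fin 2) ℂ)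
    (M : Bool → Bool → Matrix (Fin 2) (Fin 2) ℂ) : ℝ :=
  (1 / 8) * ∑ x : Bool × Bool, ∑ y : Bool, ((ρ x * M y (bit x y)).trace).re

/-!
Write every observable as `c₀ 𝟙 + c⃗·σ⃗`. Since `(c⃗·σ⃗)² = |c⃗|² 𝟙`, one has `c⃗·σ⃗ ≤ |c⃗| 𝟙` in the
Loewner order, hence `tr[ρ (c⃗·σ⃗)] ≤ |c⃗|` for every state `ρ`. Writing `M_{b|y} = (𝟙 ± M_y)/2`, the
identity parts of the observables cancel in `W_AB`, which leaves
`W_AB = 1/2 + (1/16) ∑_x tr[ρ_x (u⃗_x·σ⃗)]` with `u⃗_x = ∑_y (-1)^{x_y} c⃗_y`. Therefore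
`W_AB ≤ 1/2 + (|c⃗₀ + c⃗₁| + |c⃗₀ - c⃗₁|)/8`, and the parallelogram law bounds the last sum by `2√2 η`.
Equality holds for `c⃗₀ = η x̂`, `c⃗₁ = η ẑ` and the pure states with Bloch vectors `u⃗_x / √2`.
-/

open scoped MatrixOrder InnerProductSpace

local notation "ℝ³" => EuclideanSpace ℝ (Fin 3)

lemma Matrix.PosSemidef.trace_mul_nonneg {n 𝕜 : Type*} [Fintype n] [RCLike 𝕜]
    {A B : Matrix n n 𝕜} (hA : A.PosSemidef) (hB : B.PosSemidef) : 0 ≤ (A * B).trace := by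
  classical
  obtain ⟨C, rfl⟩ := CStarAlgebra.nonneg_iff_eq_star_mul_self.mp hB.nonneg
  rw [star_eq_conjTranspose, ← mul_assoc, trace_mul_cycle]
  exact (hA.mul_mul_conjTranspose_same C).trace_nonneg

lemma norm_add_add_norm_sub_le {E : Type*} [NormedAddCommGroup E] [InnerProductSpace ℝ E]
    (u v : E) : ‖u + v‖ + ‖u - v‖ ≤ 2 * √(‖u‖ ^ 2 + ‖v‖ ^ 2) := by
  rw [← Real.sqrt_sq zero_le_two, ← Real.sqrt_mul (sq_nonneg 2),
    Real.le_sqrt (by positivity) (by positivity)]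
  nlinarith [parallelogram_law_with_norm ℝ u v, sq_nonneg (‖u + v‖ - ‖u - v‖)]

lemma EuclideanSpace.norm_eq_sqrt_sum_sq {ι : Type*} [Fintype ι] (w : EuclideanSpace ℝ ι) :
    ‖w‖ = √(∑ i, w i ^ 2) := by
  simp [EuclideanSpace.norm_eq]

section Bloch

variable (r s : ℝ³)

def blochObs : ℝ³ →ₗ[ℝ] Matrix (Fin 2) (Fin 2) ℂ where
  toFun r := ∑ i, ((r i : ℝ) : ℂ) • pauli i
  map_add' r s := by simp [add_smul, Finset.sum_add_distrib]
  map_smul' a r := by simp [Finset.smul_sum, mul_smul, Complex.coe_smul]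

lemma blochObs_apply : blochObs r = ∑ i, ((r i : ℝ) : ℂ) • pauli i := rfl

lemma blochObs_mul_add_mul_comm :
    blochObs r * blochObs s + blochObs s * blochObs r =
      (2 * ⟪r, s⟫_ℝ) • (1 : Matrix (Fin 2) (Fin 2) ℂ) := by
  ext i j
  fin_cases i <;> fin_cases j <;>
    simp [blochObs_apply, pauli, Fin.sum_univ_three, Complex.ext_iff, PiLp.inner_apply] <;>
    constructor <;> ring

lemma blochObs_mul_self : blochObs r * blochObs r = ‖r‖ ^ 2 • (1 : Matrix (Fin 2) (Fin 2) ℂ) := by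
  have h := blochObs_mul_add_mul_comm r r
  rw [← two_smul ℝ, real_inner_self_eq_norm_sq, mul_smul] at h
  exact smul_right_injective _ two_ne_zero h

lemma blochObs_isHermitian : (blochObs r).IsHermitian := by
  ext i j
  fin_cases i <;> fin_cases j <;> simp [blochObs_apply, pauli, Fin.sum_univ_three]

lemma trace_blochObs : (blochObs r).trace = 0 := by
  simp [blochObs_apply, pauli, Fin.sum_univ_three, trace_fin_two]

lemma trace_blochObs_mul_blochObs : (blochObs r * blochObs s).trace = 2 * ⟪r, s⟫_ℝ := by
  have h := congrArg trace (blochObs_mul_add_mul_comm r s)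
  rw [trace_add, trace_mul_comm (blochObs s), trace_smul, trace_one] at h
  simp only [Fintype.card_fin, Complex.real_smul] at h
  push_cast at h
  linear_combination h / 2

/-- `B = ‖r‖ 𝟙 - r⃗·σ⃗` satisfies `B² = 2‖r‖ B`, so `B = Bᴴ B / (2‖r‖)` unless `r = 0`. -/
lemma blochObs_le_norm_smul_one : blochObs r ≤ ‖r‖ • (1 : Matrix (Fin 2) (Fin 2) ℂ) := by
  rw [le_iff]
  set B := ‖r‖ • (1 : Matrix (Fin 2) (Fin 2) ℂ) - blochObs r with hB
  have hB_sq : Bᴴ * B = (2 * ‖r‖) • B := by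
    rw [hB, conjTranspose_sub, (blochObs_isHermitian r).eq, conjTranspose_smul, conjTranspose_one,
      star_trivial, sub_mul, mul_sub, mul_sub, blochObs_mul_self]
    simp only [smul_mul, mul_smul_comm, one_mul, mul_one]
    module
  rcases (norm_nonneg r).eq_or_lt with h | h
  · simp [hB, norm_eq_zero.mp h.symm, PosSemidef.zero]
  · have hB_eq : B = (2 * ‖r‖)⁻¹ • (Bᴴ * B) := by
      rw [hB_sq, smul_smul, inv_mul_cancel₀ (by positivity), one_smul]
    rw [hB_eq]
    exact (posSemidef_conjTranspose_mul_self B).smul (by positivity)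

lemma re_trace_mul_blochObs_le {ρ : Matrix (Fin 2) (Fin 2) ℂ} (hρ : ρ.PosSemidef)
    (htr : ρ.trace = 1) : (ρ * blochObs r).trace.re ≤ ‖r‖ := by
  have h := hρ.trace_mul_nonneg (blochObs_le_norm_smul_one r)
  rw [mul_sub, trace_sub, mul_smul_comm, mul_one, trace_smul, htr, Complex.le_def] at h
  simpa using h.1

def blochState : Matrix (Fin 2) (Fin 2) ℂ := (2 : ℝ)⁻¹ • (1 + blochObs r)

lemma trace_blochState : (blochState r).trace = 1 := by
  simp [blochState, trace_add, trace_blochObs]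

lemma trace_blochState_mul_blochObs : (blochState r * blochObs s).trace = ⟪r, s⟫_ℝ := by
  simp [blochState, add_mul, trace_add, trace_blochObs, trace_blochObs_mul_blochObs]

/-- `ρ = (𝟙 + r⃗·σ⃗)/2` satisfies `ρ² = ρ - (1 - ‖r‖²)/4 · 𝟙`. -/
lemma blochState_posSemidef {r : ℝ³} (hr : ‖r‖ ≤ 1) : (blochState r).PosSemidef := by
  have hρ : (blochState r)ᴴ = blochState r := by
    simp [blochState, conjTranspose_add, (blochObs_isHermitian r).eq]
  have hρ_eq : blochState r = (blochState r)ᴴ * blochState r + ((1 - ‖r‖ ^ 2) / 4) • 1 := by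
    rw [hρ, blochState, smul_mul_smul, add_mul, mul_add, mul_add, blochObs_mul_self]
    simp only [one_mul, mul_one]
    module
  rw [hρ_eq]
  exact (posSemidef_conjTranspose_mul_self _).add
    (PosSemidef.one.smul (by nlinarith [norm_nonneg r]))

lemma blochState_add_blochState_neg : blochState r + blochState (-r) = 1 := by
  simp only [blochState, map_neg]
  module

lemma blochState_sub_blochState_neg : blochState r - blochState (-r) = blochObs r := by
  simp only [blochState, map_neg]
  module

end Bloch

@[simp] lemma bit_false (x : Bool × Bool) : bit x false = x.1 := rfl

@[simp] lemma bit_true (x : Bool × Bool) : bit x true = x.2 := rfl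

def boolSign (b : Bool) : ℝ := if b then -1 else 1

@[simp] lemma boolSign_false : boolSign false = 1 := rfl

@[simp] lemma boolSign_true : boolSign true = -1 := rfl

lemma norm_boolSign_smul {E : Type*} [SeminormedAddCommGroup E] [NormedSpace ℝ E] (b : Bool)
    (w : E) : ‖boolSign b • w‖ = ‖w‖ := by
  cases b <;> simp

lemma eq_smul_one_add_boolSign_smul {A : Type*} [Ring A] [Module ℝ A] {M : Bool → A}
    (hM : M false + M true = 1) (b : Bool) :
    M b = (2 : ℝ)⁻¹ • (1 + boolSign b • (M false - M true)) := by
  rw [← hM]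
  cases b <;> simp only [boolSign_false, boolSign_true] <;> module

/-- The direction `∑_y (-1)^{x_y} v_y` in which the state for the input `x` should point. -/
def racVec {E : Type*} [AddCommGroup E] [Module ℝ E] (v : Bool → E) (x : Bool × Bool) : E :=
  ∑ y, boolSign (bit x y) • v y

lemma racVec_smul {E : Type*} [AddCommGroup E] [Module ℝ E] (a : ℝ) (v : Bool → E)
    (x : Bool × Bool) : racVec (fun y => a • v y) x = a • racVec v x := by
  simp only [racVec, Finset.smul_sum, smul_comm a]

lemma sum_norm_racVec_le {E : Type*} [NormedAddCommGroup E] [InnerProductSpace ℝ E]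
    (v : Bool → E) : ∑ x, ‖racVec v x‖ ≤ 4 * √(‖v false‖ ^ 2 + ‖v true‖ ^ 2) := by
  have h : ∑ x, ‖racVec v x‖ = 2 * (‖v false + v true‖ + ‖v false - v true‖) := by
    simp only [racVec, Fintype.sum_prod_type, Fintype.sum_bool, bit_false, bit_true,
      boolSign_false, boolSign_true, one_smul, neg_one_smul]
    rw [show -v true + -v false = -(v false + v true) by abel,
      show v true + -v false = -(v false - v true) by abel,
      show -v true + v false = v false - v true by abel, norm_neg, norm_neg, add_comm (v true)]
    ring
  linarith [norm_add_add_norm_sub_le (v false) (v true)]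

lemma WABm_eq_half_add_sum_racVec (ρ : Bool × Bool → Matrix (Fin 2) (Fin 2) ℂ)
    (M : Bool → Bool → Matrix (Fin 2) (Fin 2) ℂ) (c0 : Bool → ℝ)
    (v : Bool → ℝ³) (hρ : ∀ x, (ρ x).trace = 1)
    (hM : ∀ y, M y false + M y true = 1)
    (hE : ∀ y, M y false - M y true = ((c0 y : ℝ) : ℂ) • 1 + blochObs (v y)) :
    WABm ρ M = 1 / 2 + 1 / 16 * ∑ x, ((ρ x * blochObs (racVec v x)).trace).re := by
  have hterm (x : Bool × Bool) (y : Bool) : ((ρ x * M y (bit x y)).trace).re =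
      1 / 2 + boolSign (bit x y) / 2 * (c0 y + ((ρ x * blochObs (v y)).trace).re) := by
    rw [eq_smul_one_add_boolSign_smul (hM y), hE]
    simp only [mul_smul_comm, mul_add, mul_one, trace_smul, trace_add, hρ, Complex.real_smul,
      smul_eq_mul, Complex.re_ofReal_mul, Complex.add_re, Complex.ofReal_re]
    ring
  have hrac (x : Bool × Bool) : ((ρ x * blochObs (racVec v x)).trace).re =
      ∑ y, boolSign (bit x y) * ((ρ x * blochObs (v y)).trace).re := by
    simp [racVec, mul_add, trace_add, trace_smul]
  simp only [WABm, hterm, hrac]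
  simp only [Fintype.sum_prod_type, Fintype.sum_bool, bit_false, bit_true, boolSign_false,
    boolSign_true]
  ring

lemma WABm_le (ρ : Bool × Bool → Matrix (Fin 2) (Fin 2) ℂ)
    (M : Bool → Bool → Matrix (Fin 2) (Fin 2) ℂ) (c0 : Bool → ℝ)
    (v : Bool → ℝ³) (η : ℝ) (hρ : ∀ x, (ρ x).PosSemidef ∧ (ρ x).trace = 1)
    (hM : ∀ y, M y false + M y true = 1)
    (hE : ∀ y, M y false - M y true = ((c0 y : ℝ) : ℂ) • 1 + blochObs (v y))
    (hv : ∀ y, ‖v y‖ = η) :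
    WABm ρ M ≤ 1 / 2 + η / (2 * √2) := by
  have hη : 0 ≤ η := hv false ▸ norm_nonneg _
  have hsum : ∑ x, ((ρ x * blochObs (racVec v x)).trace).re ≤ 4 * (√2 * η) :=
    calc ∑ x, ((ρ x * blochObs (racVec v x)).trace).re
        ≤ ∑ x, ‖racVec v x‖ :=
          Finset.sum_le_sum fun x _ => re_trace_mul_blochObs_le _ (hρ x).1 (hρ x).2
      _ ≤ 4 * √(η ^ 2 + η ^ 2) := by simpa [hv] using sum_norm_racVec_le v
      _ = 4 * (√2 * η) := by rw [← two_mul, Real.sqrt_mul zero_le_two, Real.sqrt_sq hη]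
  have hη_div : η / (2 * √2) = √2 * η / 4 := by
    field_simp
    rw [Real.sq_sqrt zero_le_two]
    ring
  rw [WABm_eq_half_add_sum_racVec ρ M c0 v (fun x => (hρ x).2) hM hE]
  linarith

def blochAxis (y : Bool) : ℝ³ := if y then !₂[0, 0, 1] else !₂[1, 0, 0]

lemma norm_blochAxis (y : Bool) : ‖blochAxis y‖ = 1 := by
  cases y <;> simp [blochAxis, EuclideanSpace.norm_eq_sqrt_sum_sq, Fin.sum_univ_three]

lemma norm_racVec_blochAxis (x : Bool × Bool) : ‖racVec blochAxis x‖ = √2 := by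
  rw [EuclideanSpace.norm_eq_sqrt_sum_sq]
  congr 1
  obtain ⟨x₀, x₁⟩ := x
  cases x₀ <;> cases x₁ <;> simp [racVec, blochAxis, Fin.sum_univ_three] <;> norm_num

lemma WABm_blochAxis (η : ℝ) :
    WABm (fun x => blochState ((√2)⁻¹ • racVec blochAxis x))
      (fun y b => blochState (boolSign b • η • blochAxis y)) = 1 / 2 + η / (2 * √2) := by
  rw [WABm_eq_half_add_sum_racVec _ _ 0 (fun y => η • blochAxis y) (fun _ => trace_blochState _)
    (fun _ => by simpa using blochState_add_blochState_neg _)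
    (fun y => by simp [blochState_sub_blochState_neg (η • blochAxis y)])]
  simp only [racVec_smul, trace_blochState_mul_blochObs, Complex.ofReal_re, real_inner_smul_left,
    real_inner_smul_right, real_inner_self_eq_norm_sq, norm_racVec_blochAxis,
    Real.sq_sqrt zero_le_two, Finset.sum_const, Finset.card_univ, Fintype.card_prod,
    Fintype.card_bool, nsmul_eq_mul]
  field_simp
  ring

/-- Sharpness lower bound from `W_AB`: for any qubit states and binary qubit
POVMs whose observables have Bloch vectors of common length `η`, one has
`W_AB ≤ 1/2 + η/(2√2)`, i.e. `η ≥ √2(2W_AB − 1)`; moreover for every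
`η ∈ [0,1]` the bound is attained. -/
theorem sharpness_lower_bound :
    (∀ (ρ : Bool × Bool → Matrix (Fin 2) (Fin 2) ℂ)
       (M : Bool → Bool → Matrix (Fin 2) (Fin 2) ℂ)
       (c0 : Bool → ℝ) (c : Bool → Fin 3 → ℝ) (η : ℝ),
       (∀ x, (ρ x).PosSemidef ∧ (ρ x).trace = 1) →
       (∀ y b, (M y b).PosSemidef) →
       (∀ y, M y false + M y true = 1) →
       (∀ y, M y false - M y true =
          ((c0 y : ℝ) : ℂ) • (1 : Matrix (Fin 2) (Fin 2) ℂ) +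
            ∑ i : Fin 3, ((c y i : ℝ) : ℂ) • pauli i) →
       (∀ y, Real.sqrt (∑ i : Fin 3, c y i ^ 2) = η) →
       WABm ρ M ≤ 1 / 2 + η / (2 * Real.sqrt 2) ∧
       η ≥ Real.sqrt 2 * (2 * WABm ρ M - 1)) ∧
    (∀ η ∈ Set.Icc (0 : ℝ) 1,
      ∃ (ρ : Bool × Bool → Matrix (Fin 2) (Fin 2) ℂ)
        (M : Bool → Bool → Matrix (Fin 2) (Fin 2) ℂ)
        (c0 : Bool → ℝ) (c : Bool → Fin 3 → ℝ),
        (∀ x, (ρ x).PosSemidef ∧ (ρ x).trace = 1) ∧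
        (∀ y b, (M y b).PosSemidef) ∧
        (∀ y, M y false + M y true = 1) ∧
        (∀ y, M y false - M y true =
           ((c0 y : ℝ) : ℂ) • (1 : Matrix (Fin 2) (Fin 2) ℂ) +
             ∑ i : Fin 3, ((c y i : ℝ) : ℂ) • pauli i) ∧
        (∀ y, Real.sqrt (∑ i : Fin 3, c y i ^ 2) = η) ∧
        WABm ρ M = 1 / 2 + η / (2 * Real.sqrt 2)) := by
  refine ⟨fun ρ M c0 c η hρ _ hM hE hc => ?_, fun η ⟨hη0, hη1⟩ => ?_⟩
  · have hW := WABm_le ρ M c0 (fun y => WithLp.toLp 2 (c y)) η hρ hM hE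
      fun y => by rw [EuclideanSpace.norm_eq_sqrt_sum_sq]; exact hc y
    refine ⟨hW, ?_⟩
    calc √2 * (2 * WABm ρ M - 1) ≤ √2 * (2 * (1 / 2 + η / (2 * √2)) - 1) := by gcongr
      _ = η := by field_simp; ring
  · have hstate (x : Bool × Bool) : ‖(√2)⁻¹ • racVec blochAxis x‖ = 1 := by
      rw [norm_smul, norm_racVec_blochAxis, norm_inv, Real.norm_of_nonneg (Real.sqrt_nonneg 2),
        inv_mul_cancel₀ (by positivity)]
    have hobs (y : Bool) : ‖η • blochAxis y‖ = η := by
      rw [norm_smul, norm_blochAxis, Real.norm_of_nonneg hη0, mul_one]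
    refine ⟨fun x => blochState ((√2)⁻¹ • racVec blochAxis x),
      fun y b => blochState (boolSign b • η • blochAxis y), 0, fun y => (η • blochAxis y).ofLp,
      fun x => ⟨blochState_posSemidef (hstate x).le, trace_blochState _⟩,
      fun y b => blochState_posSemidef (by rw [norm_boolSign_smul, hobs]; exact hη1),
      fun y => by simpa using blochState_add_blochState_neg _,
      fun y => ?_,
      fun y => by rw [← EuclideanSpace.norm_eq_sqrt_sum_sq, hobs], WABm_blochAxis η⟩
    simp only [boolSign_false, boolSign_true, one_smul, neg_one_smul, Pi.zero_apply,
      Complex.ofReal_zero, zero_smul, zero_add]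
    exact blochState_sub_blochState_neg _

end
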